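/- Let (X,μ,S,T) be an ergodic measure preserving system with commuting transformations S and T, let f1, f2 ∈ L∞(μ), and let f3 ∈ L∞(μ) be measurable with respect to the σ-algebra I_S ∨ I_T. Then the averages (1/N²) Σ_{i=0}^{N-1} Σ_{j=0}^{N-1} f1(S^i x) f2(T^j x) f3(S^i T^j x) converge for μ-almost every x ∈ X as N → ∞. -/

import Mathlib

/-!
For `f₃ = g * h` with `g ∘ S = g` and `h ∘ T = h`, commutativity of `S` and `T` makes the cubic
average factor as the product of the Birkhoff averages of `f₁ * h` along `S` and of `f₂ * g` along
`T`; both converge a.e. by Birkhoff's pointwise ergodic theorem, which for bounded functions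
follows from the maximal ergodic theorem (Garsia's argument). By linearity the same holds on the
algebra generated by the indicators of `A ∩ B` with `A ∈ I_S`, `B ∈ I_T`, and every
`I_S ∨ I_T`-set `s` is approximated in measure by sets `t` whose indicators lie in that algebra.
The cubic averages of `1_s` and `1_t` differ by at most `C₁ C₂` times the double average of
`1_{s ∆ t}` over the points `S^i T^j x`. Off the maximal set `E` of `1_{s ∆ t}` for `S` the inner
averages are at most `c`, and `μ E ≤ μ (s ∆ t) / c`; averaging `1_E` along `T` by the ergodic
theorem bounds the double average, eventually and a.e., by a function of integral at most
`2c + μ (s ∆ t) / c`. Finally, a bounded `I_S ∨ I_T`-measurable `f₃` is a uniform limit of step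
functions on `I_S ∨ I_T`-sets.
-/

open MeasureTheory Filter

/-- The σ-algebra of `R`-invariant measurable sets. -/
def invSigma {X : Type*} [MeasurableSpace X] (R : X → X) : MeasurableSpace X where
  MeasurableSet' s := MeasurableSet s ∧ R ⁻¹' s = s
  measurableSet_empty := ⟨MeasurableSet.empty, rfl⟩
  measurableSet_compl s hs := ⟨hs.1.compl, by rw [Set.preimage_compl, hs.2]⟩
  measurableSet_iUnion f hf := ⟨MeasurableSet.iUnion fun i => (hf i).1, by
    rw [Set.preimage_iUnion]; exact Set.iUnion_congr fun i => (hf i).2⟩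

open Set Topology

theorem invSigma_le {X : Type*} [m : MeasurableSpace X] (R : X → X) : invSigma R ≤ m :=
  fun _ h => h.1

section LimsupPerturbation

variable {ι : Type*} {l : Filter ι} [l.NeBot] {u v : ι → ℝ}

theorem limsup_add_eq_of_tendsto_zero (hu : IsBoundedUnder (· ≤ ·) l u)
    (hu' : IsBoundedUnder (· ≥ ·) l u) (hv : Tendsto v l (𝓝 0)) :
    limsup (u + v) l = limsup u l := by
  apply le_antisymm
  · calc limsup (u + v) l ≤ limsup u l + limsup v l :=
          limsup_add_le hu' hu hv.isBoundedUnder_ge.isCoboundedUnder_le hv.isBoundedUnder_le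
      _ = limsup u l := by rw [hv.limsup_eq, add_zero]
  · calc limsup u l = limsup u l + liminf v l := by rw [hv.liminf_eq, add_zero]
      _ ≤ limsup (u + v) l :=
          le_limsup_add hu hu'.isCoboundedUnder_le hv.isBoundedUnder_le hv.isBoundedUnder_ge

theorem liminf_add_eq_of_tendsto_zero (hu : IsBoundedUnder (· ≤ ·) l u)
    (hu' : IsBoundedUnder (· ≥ ·) l u) (hv : Tendsto v l (𝓝 0)) :
    liminf (u + v) l = liminf u l := by
  apply le_antisymm
  · calc liminf (u + v) l = liminf (v + u) l := by rw [add_comm]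
      _ ≤ limsup v l + liminf u l :=
          liminf_add_le hv.isBoundedUnder_ge hv.isBoundedUnder_le hu' hu.isCoboundedUnder_ge
      _ = liminf u l := by rw [hv.limsup_eq, zero_add]
  · calc liminf u l = liminf u l + liminf v l := by rw [hv.liminf_eq, add_zero]
      _ ≤ liminf (u + v) l :=
          le_liminf_add hu' hu hv.isBoundedUnder_ge hv.isBoundedUnder_le.isCoboundedUnder_ge

end LimsupPerturbation

section Indicator

variable {X : Type*} {R : X → X}

theorem abs_indicator_one_le (s : Set X) (x : X) : |s.indicator (1 : X → ℝ) x| ≤ 1 := by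
  by_cases hx : x ∈ s <;> simp [hx]

theorem abs_mul_indicator_one_le {f : X → ℝ} {C : ℝ} (hfC : ∀ x, |f x| ≤ C) (A : Set X)
    (x : X) : |(f * A.indicator 1 : X → ℝ) x| ≤ C := by
  rw [Pi.mul_apply, abs_mul]
  exact (mul_le_of_le_one_right (abs_nonneg _) (abs_indicator_one_le A x)).trans (hfC x)

theorem indicator_one_comp_of_preimage_eq {A : Set X} (hA : R ⁻¹' A = A) :
    A.indicator (1 : X → ℝ) ∘ R = A.indicator 1 :=
  funext fun x => by rw [Function.comp_apply, ← indicator_comp_right, hA]; rfl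

open scoped symmDiff in
theorem abs_indicator_one_sub_indicator_one (s t : Set X) :
    (fun x => |(s.indicator 1 - t.indicator 1 : X → ℝ) x|) = (s ∆ t).indicator 1 :=
  funext fun x => by
    rw [Pi.sub_apply, ← abs_indicator_symmDiff,
      abs_of_nonneg (indicator_nonneg (f := 1) (fun _ _ => zero_le_one) x)]

end Indicator

section BirkhoffSum

variable {X : Type*} {R : X → X} {g : X → ℝ} {C : ℝ}

theorem abs_birkhoffSum_le (hgC : ∀ x, |g x| ≤ C) (n : ℕ) (x : X) :
    |birkhoffSum R g n x| ≤ n * C := by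
  calc |birkhoffSum R g n x| ≤ ∑ k ∈ Finset.range n, |g (R^[k] x)| :=
        Finset.abs_sum_le_sum_abs _ _
    _ ≤ ∑ _k ∈ Finset.range n, C := Finset.sum_le_sum fun k _ => hgC _
    _ = n * C := by simp

theorem abs_birkhoffAverage_le (hgC : ∀ x, |g x| ≤ C) (n : ℕ) (x : X) :
    |birkhoffAverage ℝ R g n x| ≤ C := by
  rcases n.eq_zero_or_pos with rfl | hn
  · simpa using (abs_nonneg _).trans (hgC x)
  rw [birkhoffAverage, smul_eq_mul, abs_mul, abs_inv, Nat.abs_cast,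
    inv_mul_le_iff₀ (by positivity)]
  exact abs_birkhoffSum_le hgC n x

theorem birkhoffAverage_mono {g' : X → ℝ} (h : ∀ x, g x ≤ g' x) (n : ℕ) (x : X) :
    birkhoffAverage ℝ R g n x ≤ birkhoffAverage ℝ R g' n x := by
  simp only [birkhoffAverage, birkhoffSum, smul_eq_mul]
  gcongr with k
  exact h _

theorem birkhoffAverage_nonneg (hg : ∀ x, 0 ≤ g x) (n : ℕ) (x : X) :
    0 ≤ birkhoffAverage ℝ R g n x := by
  simpa [birkhoffAverage, birkhoffSum] using birkhoffAverage_mono (R := R) hg n x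

variable [MeasurableSpace X] {μ : Measure X}

theorem Measurable.integrable_of_abs_le [IsFiniteMeasure μ] (hg : Measurable g)
    (hgC : ∀ x, |g x| ≤ C) : Integrable g μ :=
  .of_bound hg.aestronglyMeasurable C (ae_of_all _ hgC)

theorem measurable_birkhoffSum (hR : Measurable R) (hg : Measurable g) (n : ℕ) :
    Measurable (birkhoffSum R g n) :=
  Finset.measurable_sum _ fun k _ => hg.comp (hR.iterate k)

theorem measurable_birkhoffAverage (hR : Measurable R) (hg : Measurable g) (n : ℕ) :
    Measurable (birkhoffAverage ℝ R g n) :=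
  (measurable_birkhoffSum hR hg n).const_smul ((n : ℝ)⁻¹)

theorem MeasureTheory.MeasurePreserving.integral_comp_of_measurable
    (hR : MeasurePreserving R μ μ) (hg : Measurable g) : ∫ x, g (R x) ∂μ = ∫ x, g x ∂μ := by
  conv_rhs => rw [← hR.map_eq]
  exact (integral_map hR.aemeasurable hg.aestronglyMeasurable).symm

theorem MeasureTheory.MeasurePreserving.integral_birkhoffAverage [IsFiniteMeasure μ]
    (hR : MeasurePreserving R μ μ) (hg : Measurable g) (hgC : ∀ x, |g x| ≤ C) {n : ℕ}
    (hn : n ≠ 0) : ∫ x, birkhoffAverage ℝ R g n x ∂μ = ∫ x, g x ∂μ := by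
  have hcomp : ∀ k, ∫ x, g (R^[k] x) ∂μ = ∫ x, g x ∂μ := fun k =>
    (hR.iterate k).integral_comp_of_measurable hg
  simp only [birkhoffAverage, birkhoffSum, smul_eq_mul]
  rw [integral_const_mul, integral_finsetSum (f := fun k x => g (R^[k] x)) _ fun k _ =>
    (hg.comp (hR.measurable.iterate k)).integrable_of_abs_le (C := C) fun x => hgC _]
  simp [hcomp, hn]

end BirkhoffSum

section MaximalErgodic

variable {X : Type*} {R : X → X} {g : X → ℝ} {C : ℝ}

theorem partialSups_birkhoffSum_le_add {x : X} {N : ℕ}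
    (h : 0 < partialSups (birkhoffSum R g · x) N) :
    partialSups (birkhoffSum R g · x) N ≤ g x + partialSups (birkhoffSum R g · (R x)) N := by
  obtain ⟨n, hnN, hn⟩ := exists_partialSups_eq (birkhoffSum R g · x) N
  rw [hn] at h ⊢
  cases n with
  | zero => simp [birkhoffSum_zero] at h
  | succ n =>
    rw [birkhoffSum_succ']
    gcongr
    exact le_partialSups_of_le (birkhoffSum R g · (R x)) (by omega)

variable [MeasurableSpace X] {μ : Measure X} [IsFiniteMeasure μ]

theorem MeasureTheory.MeasurePreserving.setIntegral_nonneg_of_le_add_comp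
    (hR : MeasurePreserving R μ μ) (hg : Measurable g) (hgC : ∀ x, |g x| ≤ C) {M : X → ℝ}
    (hM : Measurable M) {D : ℝ} (hMD : ∀ x, |M x| ≤ D) (hM0 : ∀ x, 0 ≤ M x)
    (hMg : ∀ x, 0 < M x → M x ≤ g x + M (R x)) :
    0 ≤ ∫ x in {x | 0 < M x}, g x ∂μ := by
  have hE : MeasurableSet {x | 0 < M x} := measurableSet_lt measurable_const hM
  have hMi : Integrable M μ := hM.integrable_of_abs_le hMD
  have hMRi : Integrable (fun x => M (R x)) μ :=
    (hM.comp hR.measurable).integrable_of_abs_le fun x => hMD (R x)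
  have hM_on : ∫ x in {x | 0 < M x}, M x ∂μ = ∫ x, M x ∂μ :=
    setIntegral_eq_integral_of_forall_compl_eq_zero fun x hx =>
      le_antisymm (not_lt.1 hx) (hM0 x)
  calc (0 : ℝ) = ∫ x, M x ∂μ - ∫ x, M (R x) ∂μ := by
        rw [hR.integral_comp_of_measurable hM, sub_self]
    _ ≤ ∫ x in {x | 0 < M x}, M x ∂μ - ∫ x in {x | 0 < M x}, M (R x) ∂μ := by
        rw [hM_on]
        exact sub_le_sub_left (setIntegral_le_integral hMRi (ae_of_all _ fun x => hM0 _)) _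
    _ = ∫ x in {x | 0 < M x}, (M x - M (R x)) ∂μ :=
        (integral_sub hMi.integrableOn hMRi.integrableOn).symm
    _ ≤ ∫ x in {x | 0 < M x}, g x ∂μ :=
        setIntegral_mono_on (hMi.sub hMRi).integrableOn
          (hg.integrable_of_abs_le hgC).integrableOn hE fun x hx => by
            linarith [hMg x hx]

theorem MeasureTheory.MeasurePreserving.maximal_ergodic_theorem (hR : MeasurePreserving R μ μ)
    (hg : Measurable g) (hgC : ∀ x, |g x| ≤ C) :
    0 ≤ ∫ x in {x | ∃ n, 0 < birkhoffSum R g n x}, g x ∂μ := by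
  set M : ℕ → X → ℝ := fun N x => partialSups (birkhoffSum R g · x) N
  have hM : ∀ N, Measurable (M N) := fun N => by
    have : M N = (Finset.Iic N).sup' Finset.nonempty_Iic (birkhoffSum R g) :=
      funext fun x => by simp only [M, partialSups_apply, Finset.sup'_apply]
    rw [this]
    exact Finset.measurable_sup' _ fun n _ => measurable_birkhoffSum hR.measurable hg n
  have hM0 : ∀ N x, 0 ≤ M N x := fun N x => by
    simpa using le_partialSups_of_le (birkhoffSum R g · x) (Nat.zero_le N)
  have hMD : ∀ N x, |M N x| ≤ N * C := fun N x => by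
    obtain ⟨n, hnN, hn⟩ := exists_partialSups_eq (birkhoffSum R g · x) N
    have hC : 0 ≤ C := (abs_nonneg _).trans (hgC x)
    calc |M N x| = |birkhoffSum R g n x| := congrArg abs hn
      _ ≤ n * C := abs_birkhoffSum_le hgC n x
      _ ≤ N * C := by gcongr
  have hunion : ⋃ N, {x | 0 < M N x} = {x | ∃ n, 0 < birkhoffSum R g n x} := by
    ext x
    simp only [mem_iUnion, mem_ofPred_eq]
    constructor
    · rintro ⟨N, hN⟩
      obtain ⟨n, -, hn⟩ := exists_partialSups_eq (birkhoffSum R g · x) N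
      exact ⟨n, hn ▸ hN⟩
    · rintro ⟨n, hn⟩
      exact ⟨n, hn.trans_le (le_partialSups (birkhoffSum R g · x) n)⟩
  rw [← hunion]
  refine ge_of_tendsto' (tendsto_setIntegral_of_monotone
    (fun N => measurableSet_lt measurable_const (hM N)) (fun N N' hNN' x hx => ?_)
    (hg.integrable_of_abs_le hgC).integrableOn) fun N =>
      hR.setIntegral_nonneg_of_le_add_comp hg hgC (hM N) (hMD N) (hM0 N) fun x =>
        partialSups_birkhoffSum_le_add
  exact (show 0 < M N x from hx).trans_le ((partialSups _).monotone hNN')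

end MaximalErgodic

section MaximalInequalities

variable {X : Type*} {R : X → X} {g : X → ℝ} {C : ℝ} {E : Set X}

theorem birkhoffSum_sub_const (c : ℝ) (n : ℕ) (x : X) :
    birkhoffSum R (fun y => g y - c) n x = birkhoffSum R g n x - n * c := by
  rw [show (fun y => g y - c) = g - fun _ => c from rfl, birkhoffSum_sub,
    birkhoffSum_of_comp_eq (φ := fun _ => c) rfl]
  simp

theorem birkhoffSum_indicator_of_preimage_eq (hE : R ⁻¹' E = E) (n : ℕ) :
    birkhoffSum R (E.indicator g) n = E.indicator (birkhoffSum R g n) := by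
  have horbit : ∀ k x, R^[k] x ∈ E ↔ x ∈ E := fun k x => by
    rw [← mem_preimage, preimage_iterate_eq, Function.iterate_fixed hE]
  funext x
  by_cases hx : x ∈ E
  · simp [birkhoffSum, horbit, hx]
  · simp [birkhoffSum, horbit, hx]

variable [MeasurableSpace X] {μ : Measure X} [IsFiniteMeasure μ]

theorem MeasureTheory.MeasurePreserving.weak_maximal_inequality (hR : MeasurePreserving R μ μ)
    (hg : Measurable g) (hgC : ∀ x, |g x| ≤ C) (hg0 : ∀ x, 0 ≤ g x) (c : ℝ) :
    c * μ.real {x | ∃ n : ℕ, c * n < birkhoffSum R g n x} ≤ ∫ x, g x ∂μ := by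
  set E := {x | ∃ n : ℕ, c * n < birkhoffSum R g n x}
  have hE : E = {x | ∃ n, 0 < birkhoffSum R (fun y => g y - c) n x} := by
    simp only [E, birkhoffSum_sub_const, sub_pos, mul_comm c]
  have hmax := hR.maximal_ergodic_theorem (g := fun y => g y - c) (hg.sub measurable_const)
    (C := C + |c|) fun x => (abs_sub (g x) c).trans (by linarith [hgC x])
  rw [← hE, integral_sub (hg.integrable_of_abs_le hgC).integrableOn
    (integrable_const c).integrableOn, setIntegral_const, smul_eq_mul] at hmax
  have hgi : ∫ x in E, g x ∂μ ≤ ∫ x, g x ∂μ :=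
    setIntegral_le_integral (hg.integrable_of_abs_le hgC) (ae_of_all _ hg0)
  linarith

theorem MeasureTheory.MeasurePreserving.mul_measureReal_le_setIntegral_of_invariant
    (hR : MeasurePreserving R μ μ) (hg : Measurable g) (hgC : ∀ x, |g x| ≤ C)
    (hE : MeasurableSet E) (hRE : R ⁻¹' E = E) {c : ℝ}
    (hc : ∀ x ∈ E, ∃ n : ℕ, c * n < birkhoffSum R g n x) :
    c * μ.real E ≤ ∫ x in E, g x ∂μ := by
  have hset : {x | ∃ n, 0 < birkhoffSum R (E.indicator fun y => g y - c) n x} = E := by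
    ext x
    simp only [birkhoffSum_indicator_of_preimage_eq hRE, mem_ofPred_eq]
    by_cases hx : x ∈ E
    · simp only [indicator_of_mem hx, birkhoffSum_sub_const, sub_pos, mul_comm _ c, hx,
        iff_true]
      exact hc x hx
    · simp [hx]
  have hmax := hR.maximal_ergodic_theorem (g := E.indicator fun y => g y - c)
    ((hg.sub measurable_const).indicator hE) (C := C + |c|)
    fun x => by
      have h := norm_indicator_le_norm_self (s := E) (fun y => g y - c) x
      rw [Real.norm_eq_abs, Real.norm_eq_abs] at h
      exact h.trans ((abs_sub (g x) c).trans (by linarith [hgC x]))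
  rw [hset, setIntegral_indicator hE, inter_self,
    integral_sub (hg.integrable_of_abs_le hgC).integrableOn (integrable_const c).integrableOn,
    setIntegral_const, smul_eq_mul] at hmax
  linarith

end MaximalInequalities

section PointwiseErgodic

variable {X : Type*} {R : X → X} {g : X → ℝ} {C : ℝ}

theorem lt_birkhoffAverage_iff {n : ℕ} (hn : n ≠ 0) (c : ℝ) (x : X) :
    c < birkhoffAverage ℝ R g n x ↔ c * n < birkhoffSum R g n x := by
  rw [birkhoffAverage, smul_eq_mul, lt_inv_mul_iff₀ (by positivity), mul_comm]

theorem exists_lt_birkhoffSum_of_frequently {c : ℝ} {x : X}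
    (h : ∃ᶠ n in atTop, c < birkhoffAverage ℝ R g n x) :
    ∃ n : ℕ, c * n < birkhoffSum R g n x := by
  obtain ⟨n, hn, hn1⟩ := (h.and_eventually (eventually_ge_atTop 1)).exists
  exact ⟨n, (lt_birkhoffAverage_iff (by omega) _ _).1 hn⟩

theorem isBoundedUnder_le_birkhoffAverage (hgC : ∀ x, |g x| ≤ C) (x : X) :
    IsBoundedUnder (· ≤ ·) atTop (birkhoffAverage ℝ R g · x) :=
  isBoundedUnder_of ⟨C, fun n => (abs_le.1 (abs_birkhoffAverage_le hgC n x)).2⟩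

theorem isBoundedUnder_ge_birkhoffAverage (hgC : ∀ x, |g x| ≤ C) (x : X) :
    IsBoundedUnder (· ≥ ·) atTop (birkhoffAverage ℝ R g · x) :=
  isBoundedUnder_of ⟨-C, fun n => (abs_le.1 (abs_birkhoffAverage_le hgC n x)).1⟩

theorem tendsto_birkhoffAverage_apply_sub_birkhoffAverage_of_abs_le (hgC : ∀ x, |g x| ≤ C)
    (x : X) : Tendsto (fun n => birkhoffAverage ℝ R g n (R x) - birkhoffAverage ℝ R g n x)
      atTop (𝓝 0) :=
  tendsto_birkhoffAverage_apply_sub_birkhoffAverage' ℝ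
    (isBounded_iff_forall_norm_le.2 ⟨C, by rintro _ ⟨y, rfl⟩; exact hgC y⟩) R x

theorem limsup_birkhoffAverage_apply (hgC : ∀ x, |g x| ≤ C) (x : X) :
    limsup (birkhoffAverage ℝ R g · (R x)) atTop = limsup (birkhoffAverage ℝ R g · x) atTop := by
  simpa [Pi.add_def] using limsup_add_eq_of_tendsto_zero
    (isBoundedUnder_le_birkhoffAverage (R := R) hgC x)
    (isBoundedUnder_ge_birkhoffAverage (R := R) hgC x)
    (tendsto_birkhoffAverage_apply_sub_birkhoffAverage_of_abs_le (R := R) hgC x)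

theorem liminf_birkhoffAverage_apply (hgC : ∀ x, |g x| ≤ C) (x : X) :
    liminf (birkhoffAverage ℝ R g · (R x)) atTop = liminf (birkhoffAverage ℝ R g · x) atTop := by
  simpa [Pi.add_def] using liminf_add_eq_of_tendsto_zero
    (isBoundedUnder_le_birkhoffAverage (R := R) hgC x)
    (isBoundedUnder_ge_birkhoffAverage (R := R) hgC x)
    (tendsto_birkhoffAverage_apply_sub_birkhoffAverage_of_abs_le (R := R) hgC x)

variable [MeasurableSpace X] {μ : Measure X} [IsFiniteMeasure μ]

theorem MeasureTheory.MeasurePreserving.measure_liminf_lt_lt_limsup_birkhoffAverage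
    (hR : MeasurePreserving R μ μ) (hg : Measurable g) (hgC : ∀ x, |g x| ≤ C) {q r : ℝ}
    (hqr : q < r) :
    μ {x | liminf (birkhoffAverage ℝ R g · x) atTop < q ∧
      r < limsup (birkhoffAverage ℝ R g · x) atTop} = 0 := by
  set E := {x | liminf (birkhoffAverage ℝ R g · x) atTop < q ∧
      r < limsup (birkhoffAverage ℝ R g · x) atTop}
  have hA := measurable_birkhoffAverage hR.measurable hg
  have hE : MeasurableSet E :=
    (measurableSet_lt (.liminf hA) measurable_const).inter
      (measurableSet_lt measurable_const (.limsup hA))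
  have hRE : R ⁻¹' E = E := by
    ext x
    simp only [E, mem_preimage, mem_ofPred_eq, limsup_birkhoffAverage_apply hgC x,
      liminf_birkhoffAverage_apply hgC x]
  have hupper := hR.mul_measureReal_le_setIntegral_of_invariant hg hgC hE hRE (c := r)
    fun x hx => exists_lt_birkhoffSum_of_frequently (frequently_lt_of_lt_limsup
      (isBoundedUnder_ge_birkhoffAverage hgC x).isCoboundedUnder_le hx.2)
  have hlower := hR.mul_measureReal_le_setIntegral_of_invariant hg.neg
    (fun x => (abs_neg (g x)).trans_le (hgC x)) hE hRE (c := -q) fun x hx =>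
      exists_lt_birkhoffSum_of_frequently <|
      (frequently_lt_of_liminf_lt (isBoundedUnder_le_birkhoffAverage hgC x).isCoboundedUnder_ge
        hx.1).mono fun n hn => by simpa [birkhoffAverage_neg] using hn
  simp only [Pi.neg_apply, integral_neg] at hlower
  have hEreal : μ.real E = 0 := by nlinarith [measureReal_nonneg (μ := μ) (s := E)]
  exact (measureReal_eq_zero_iff).1 hEreal

theorem MeasureTheory.MeasurePreserving.ae_tendsto_limsup_birkhoffAverage
    (hR : MeasurePreserving R μ μ) (hg : Measurable g) (hgC : ∀ x, |g x| ≤ C) :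
    ∀ᵐ x ∂μ, Tendsto (birkhoffAverage ℝ R g · x) atTop
      (𝓝 (limsup (birkhoffAverage ℝ R g · x) atTop)) := by
  have hosc : ∀ᵐ x ∂μ, ∀ q r : ℚ, q < r → ¬(liminf (birkhoffAverage ℝ R g · x) atTop < q ∧
      r < limsup (birkhoffAverage ℝ R g · x) atTop) := by
    simp only [ae_all_iff]
    intro q r hqr
    exact measure_eq_zero_iff_ae_notMem.1
      (hR.measure_liminf_lt_lt_limsup_birkhoffAverage hg hgC (Rat.cast_lt.2 hqr))
  filter_upwards [hosc] with x hx
  have hle := isBoundedUnder_le_birkhoffAverage (R := R) hgC x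
  have hge := isBoundedUnder_ge_birkhoffAverage (R := R) hgC x
  refine tendsto_of_liminf_eq_limsup ?_ rfl hle hge
  refine (liminf_le_limsup hle hge).antisymm (not_lt.1 fun hlt => ?_)
  obtain ⟨q, hq, hqr⟩ := exists_rat_btwn hlt
  obtain ⟨r, hqr, hr⟩ := exists_rat_btwn hqr
  exact hx q r (by exact_mod_cast hqr) ⟨hq, hr⟩

theorem MeasureTheory.MeasurePreserving.exists_integral_eq_ae_tendsto_birkhoffAverage
    (hR : MeasurePreserving R μ μ) (hg : Measurable g) (hgC : ∀ x, |g x| ≤ C) :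
    ∃ G : X → ℝ, Integrable G μ ∧ ∫ x, G x ∂μ = ∫ x, g x ∂μ ∧
      ∀ᵐ x ∂μ, Tendsto (birkhoffAverage ℝ R g · x) atTop (𝓝 (G x)) := by
  have hA := measurable_birkhoffAverage hR.measurable hg
  have hlim := hR.ae_tendsto_limsup_birkhoffAverage hg hgC
  have hbound : ∀ n, ∀ᵐ x ∂μ, ‖birkhoffAverage ℝ R g n x‖ ≤ C := fun n =>
    ae_of_all _ (abs_birkhoffAverage_le hgC n)
  refine ⟨_, .of_bound (Measurable.limsup hA).aestronglyMeasurable C ?_, ?_, hlim⟩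
  · filter_upwards [hlim] with x hx
    exact le_of_tendsto' hx.norm (abs_birkhoffAverage_le hgC · x)
  · refine tendsto_nhds_unique (tendsto_integral_of_dominated_convergence (fun _ => C)
      (fun n => (hA n).aestronglyMeasurable) (integrable_const C) hbound hlim) ?_
    refine tendsto_const_nhds.congr' ?_
    filter_upwards [eventually_ne_atTop 0] with n hn
    exact (hR.integral_birkhoffAverage hg hgC hn).symm

end PointwiseErgodic

section CubicAverage

variable {X : Type*} {S T : X → X} {f₁ f₂ : X → ℝ} {C₁ C₂ : ℝ}

noncomputable def cubicAverage (S T : X → X) (f₁ f₂ f₃ : X → ℝ) (N : ℕ) (x : X) : ℝ :=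
  ((N : ℝ) ^ 2)⁻¹ * ∑ i ∈ Finset.range N, ∑ j ∈ Finset.range N,
    f₁ (S^[i] x) * f₂ (T^[j] x) * f₃ (S^[i] (T^[j] x))

theorem cubicAverage_add (φ ψ : X → ℝ) (N : ℕ) (x : X) :
    cubicAverage S T f₁ f₂ (φ + ψ) N x =
      cubicAverage S T f₁ f₂ φ N x + cubicAverage S T f₁ f₂ ψ N x := by
  simp only [cubicAverage, Pi.add_apply, mul_add, Finset.sum_add_distrib]

theorem cubicAverage_smul (c : ℝ) (φ : X → ℝ) (N : ℕ) (x : X) :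
    cubicAverage S T f₁ f₂ (c • φ) N x = c * cubicAverage S T f₁ f₂ φ N x := by
  simp only [cubicAverage, Pi.smul_apply, smul_eq_mul, Finset.mul_sum]
  congr 1 with i
  congr 1 with j
  ring

theorem cubicAverage_sub (φ ψ : X → ℝ) (N : ℕ) (x : X) :
    cubicAverage S T f₁ f₂ (φ - ψ) N x =
      cubicAverage S T f₁ f₂ φ N x - cubicAverage S T f₁ f₂ ψ N x := by
  simp only [cubicAverage, Pi.sub_apply, mul_sub, Finset.sum_sub_distrib]

theorem birkhoffAverage_birkhoffAverage (e : X → ℝ) (N : ℕ) (x : X) :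
    birkhoffAverage ℝ T (birkhoffAverage ℝ S e N) N x =
      ((N : ℝ) ^ 2)⁻¹ * ∑ i ∈ Finset.range N, ∑ j ∈ Finset.range N, e (S^[i] (T^[j] x)) := by
  simp only [birkhoffAverage, birkhoffSum, smul_eq_mul, Finset.mul_sum]
  rw [Finset.sum_comm]
  congr 1 with i
  congr 1 with j
  ring

theorem abs_cubicAverage_le (hf₁ : ∀ x, |f₁ x| ≤ C₁) (hf₂ : ∀ x, |f₂ x| ≤ C₂) (φ : X → ℝ)
    (N : ℕ) (x : X) :
    |cubicAverage S T f₁ f₂ φ N x| ≤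
      C₁ * C₂ * birkhoffAverage ℝ T (birkhoffAverage ℝ S (fun y => |φ y|) N) N x := by
  have hC₁ : 0 ≤ C₁ := (abs_nonneg _).trans (hf₁ x)
  rw [birkhoffAverage_birkhoffAverage, cubicAverage, abs_mul, abs_of_nonneg (by positivity),
    mul_left_comm, Finset.mul_sum]
  gcongr
  refine (Finset.abs_sum_le_sum_abs _ _).trans (Finset.sum_le_sum fun i _ => ?_)
  rw [Finset.mul_sum]
  refine (Finset.abs_sum_le_sum_abs _ _).trans (Finset.sum_le_sum fun j _ => ?_)
  rw [abs_mul, abs_mul]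
  gcongr
  exacts [hf₁ _, hf₂ _]

theorem cubicAverage_mul_of_invariant (hST : Function.Commute S T) {g h : X → ℝ}
    (hg : g ∘ S = g) (hh : h ∘ T = h) (N : ℕ) (x : X) :
    cubicAverage S T f₁ f₂ (g * h) N x =
      birkhoffAverage ℝ S (f₁ * h) N x * birkhoffAverage ℝ T (f₂ * g) N x := by
  have hgS : ∀ i y, g (S^[i] y) = g y := fun i y =>
    congrFun (Function.iterate_invariant hg i) y
  have hhT : ∀ j y, h (T^[j] y) = h y := fun j y =>
    congrFun (Function.iterate_invariant hh j) y
  simp only [cubicAverage, birkhoffAverage, birkhoffSum, smul_eq_mul, Pi.mul_apply]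
  rw [mul_mul_mul_comm, Finset.sum_mul_sum, ← mul_inv, ← sq]
  congr 1
  refine Finset.sum_congr rfl fun i _ => Finset.sum_congr rfl fun j _ => ?_
  rw [hgS, hST.iterate_iterate i j x, hhT]
  ring

end CubicAverage

section Rectangles

variable {X : Type*}

def rectangleIndicators (m₁ m₂ : MeasurableSpace X) : Submonoid (X → ℝ) where
  carrier := {φ | ∃ A B, MeasurableSet[m₁] A ∧ MeasurableSet[m₂] B ∧ (A ∩ B).indicator 1 = φ}
  one_mem' := ⟨univ, univ, .univ, .univ, by simp⟩
  mul_mem' := by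
    rintro _ _ ⟨A, B, hA, hB, rfl⟩ ⟨A', B', hA', hB', rfl⟩
    refine ⟨A ∩ A', B ∩ B', hA.inter hA', hB.inter hB', ?_⟩
    rw [← inter_indicator_one, inter_inter_inter_comm]

open scoped symmDiff in
theorem exists_indicator_mem_adjoin_rectangleIndicators [m : MeasurableSpace X]
    {μ : Measure X} [IsFiniteMeasure μ] {m₁ m₂ : MeasurableSpace X} (h₁ : m₁ ≤ m) (h₂ : m₂ ≤ m)
    {s : Set X} (hs : MeasurableSet[m₁ ⊔ m₂] s) {ε : ENNReal} (hε : 0 < ε) :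
    ∃ t, MeasurableSet[m₁ ⊔ m₂] t ∧
      t.indicator 1 ∈ Algebra.adjoin ℝ (rectangleIndicators m₁ m₂ : Set (X → ℝ)) ∧
      μ (t ∆ s) < ε := by
  set 𝒜 := Algebra.adjoin ℝ (rectangleIndicators m₁ m₂ : Set (X → ℝ))
  set 𝒞 : Set (Set X) := {t | MeasurableSet[m₁ ⊔ m₂] t ∧ t.indicator 1 ∈ 𝒜}
  have hmem : ∀ {A B}, MeasurableSet[m₁] A → MeasurableSet[m₂] B → A ∩ B ∈ 𝒞 := fun hA hB =>
    ⟨(le_sup_left (b := m₂) _ hA).inter (le_sup_right (a := m₁) _ hB),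
      Algebra.subset_adjoin ⟨_, _, hA, hB, rfl⟩⟩
  have h𝒞 : IsSetRing 𝒞 := by
    refine ⟨⟨@MeasurableSet.empty _ (m₁ ⊔ m₂), by rw [indicator_empty]; exact 𝒜.zero_mem⟩,
      fun t u ht hu => ⟨ht.1.union hu.1, ?_⟩, fun t u ht hu => ⟨ht.1.diff hu.1, ?_⟩⟩
    · rw [eq_sub_of_add_eq (indicator_union_add_inter (1 : X → ℝ) t u), inter_indicator_one]
      exact sub_mem (add_mem ht.2 hu.2) (mul_mem ht.2 hu.2)
    · rw [← sdiff_self_inter, indicator_sdiff inter_subset_left, inter_indicator_one]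
      exact sub_mem ht.2 (mul_mem ht.2 hu.2)
  have hgen : m₁ ⊔ m₂ = MeasurableSpace.generateFrom 𝒞 := by
    refine le_antisymm (sup_le (fun A hA => ?_) fun B hB => ?_)
      (MeasurableSpace.generateFrom_le fun t ht => ht.1)
    · simpa using MeasurableSpace.measurableSet_generateFrom (hmem hA (@MeasurableSet.univ _ m₂))
    · simpa using MeasurableSpace.measurableSet_generateFrom (hmem (@MeasurableSet.univ _ m₁) hB)
  have huniv : univ ∈ 𝒞 := by
    simpa using hmem (@MeasurableSet.univ _ m₁) (@MeasurableSet.univ _ m₂)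
  have hle : m₁ ⊔ m₂ ≤ m := sup_le h₁ h₂
  obtain ⟨t, ht, hts⟩ := exists_measure_symmDiff_lt_of_generateFrom_isSetRing (mα := m₁ ⊔ m₂)
    (μ := μ.trim hle) h𝒞 ⟨{univ}, countable_singleton _, by simpa using huniv, by simp⟩
    hgen hs hε
  refine ⟨t, ht.1, ht.2, ?_⟩
  rwa [trim_measurableSet_eq hle (ht.1.symmDiff hs)] at hts

end Rectangles

theorem exists_tendsto_of_forall_eventually_abs_sub_le {ι : Type*} {a : ℕ → ℝ}
    {b : ι → ℕ → ℝ} (hb : ∀ k, ∃ L, Tendsto (b k) atTop (𝓝 L))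
    (hab : ∀ ε > 0, ∃ k, ∀ᶠ N in atTop, |a N - b k N| ≤ ε) :
    ∃ L, Tendsto a atTop (𝓝 L) := by
  refine cauchySeq_tendsto_of_complete (Metric.cauchySeq_iff'.2 fun ε hε => ?_)
  obtain ⟨k, hk⟩ := hab (ε / 4) (by positivity)
  obtain ⟨L, hL⟩ := hb k
  have hnear : ∀ᶠ N in atTop, |a N - L| < ε / 2 := by
    filter_upwards [hk, hL.eventually (Metric.ball_mem_nhds L (by positivity : 0 < ε / 4))]
      with N hN hN'
    rw [Real.dist_eq] at hN'
    calc |a N - L| ≤ |a N - b k N| + |b k N - L| := abs_sub_le _ _ _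
      _ < ε / 2 := by linarith
  obtain ⟨N₀, hN₀⟩ := eventually_atTop.1 hnear
  refine ⟨N₀, fun n hn => ?_⟩
  rw [Real.dist_eq]
  calc |a n - a N₀| ≤ |a n - L| + |L - a N₀| := abs_sub_le _ _ _
    _ < ε := by rw [abs_sub_comm L]; linarith [hN₀ n hn, hN₀ N₀ le_rfl]

section Markov

variable {X : Type*} [MeasurableSpace X] {μ : Measure X} [IsFiniteMeasure μ]

theorem ae_exists_lt_of_forall_exists_integral_le {ι : Type*} {B : ι → X → ℝ}
    (hBi : ∀ k, Integrable (B k) μ) (hB0 : ∀ k, 0 ≤ᵐ[μ] B k)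
    (hB : ∀ ε > 0, ∃ k, ∫ x, B k x ∂μ ≤ ε) :
    ∀ᵐ x ∂μ, ∀ ε > 0, ∃ k, B k x < ε := by
  have hδ : ∀ δ > 0, ∀ᵐ x ∂μ, ∃ k, B k x < δ := fun δ hδ => by
    have hE : μ.real {x | ∀ k, δ ≤ B k x} = 0 := by
      refine le_antisymm (le_of_forall_pos_le_add fun ε hε => ?_) measureReal_nonneg
      obtain ⟨k, hk⟩ := hB (δ * ε) (by positivity)
      have hmarkov := mul_meas_ge_le_integral_of_nonneg (hB0 k) (hBi k) δ
      have hsub : μ.real {x | ∀ k, δ ≤ B k x} ≤ μ.real {x | δ ≤ B k x} :=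
        measureReal_mono fun x hx => hx k
      nlinarith
    have hE' := (measureReal_eq_zero_iff (measure_ne_top _ _)).1 hE
    filter_upwards [measure_eq_zero_iff_ae_notMem.1 hE'] with x hx
    simpa using (hx : ¬∀ k, δ ≤ B k x)
  filter_upwards [ae_all_iff.2 fun n : ℕ => hδ (1 / (n + 1)) (by positivity)] with x hx ε hε
  obtain ⟨n, hn⟩ := exists_nat_one_div_lt hε
  obtain ⟨k, hk⟩ := hx n
  exact ⟨k, hk.trans hn⟩

end Markov

section SquareAverage

variable {X : Type*} {R S T : X → X} {g : X → ℝ}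

theorem birkhoffAverage_le_add_indicator (hg : ∀ x, |g x| ≤ 1) {c : ℝ} (hc : 0 ≤ c) (N : ℕ)
    (y : X) :
    birkhoffAverage ℝ R g N y ≤
      c + {z | ∃ n : ℕ, c * n < birkhoffSum R g n z}.indicator 1 y := by
  by_cases hy : y ∈ {z | ∃ n : ℕ, c * n < birkhoffSum R g n z}
  · rw [indicator_of_mem hy, Pi.one_apply]
    linarith [(le_abs_self _).trans (abs_birkhoffAverage_le (R := R) hg N y)]
  · rw [indicator_of_notMem hy, add_zero]
    rcases eq_or_ne N 0 with rfl | hN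
    · simpa using hc
    · exact not_lt.1 fun h => hy ⟨N, (lt_birkhoffAverage_iff hN c y).1 h⟩

variable [MeasurableSpace X] {μ : Measure X} [IsProbabilityMeasure μ]

theorem exists_ae_eventually_birkhoffAverage_birkhoffAverage_indicator_le
    (hS : MeasurePreserving S μ μ) (hT : MeasurePreserving T μ μ) {F : Set X}
    (hF : MeasurableSet F) {c : ℝ} (hc : 0 < c) :
    ∃ B : X → ℝ, Integrable B μ ∧ 0 ≤ᵐ[μ] B ∧ ∫ x, B x ∂μ ≤ 2 * c + μ.real F / c ∧
      ∀ᵐ x ∂μ, ∀ᶠ N in atTop,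
        birkhoffAverage ℝ T (birkhoffAverage ℝ S (F.indicator 1) N) N x ≤ B x := by
  set E := {y | ∃ n : ℕ, c * n < birkhoffSum S (F.indicator 1) n y}
  have hE : MeasurableSet E := by
    simp only [E, ofPred_exists]
    exact .iUnion fun n => measurableSet_lt measurable_const
      (measurable_birkhoffSum hS.measurable (measurable_one.indicator hF) n)
  have hweak : c * μ.real E ≤ μ.real F := by
    simpa [integral_indicator_one hF] using hS.weak_maximal_inequality
      (measurable_one.indicator hF) (abs_indicator_one_le F)
      (fun x => indicator_nonneg (fun _ _ => zero_le_one) x) c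
  obtain ⟨G, hGi, hGint, hG⟩ := hT.exists_integral_eq_ae_tendsto_birkhoffAverage
    (measurable_one.indicator hE) (abs_indicator_one_le E)
  refine ⟨fun x => 2 * c + G x, (integrable_const _).add hGi, ?_, ?_, ?_⟩
  · filter_upwards [hG] with x hx
    exact add_nonneg (by positivity) (ge_of_tendsto' hx fun N =>
      birkhoffAverage_nonneg (fun y => indicator_nonneg (fun _ _ => zero_le_one) y) N x)
  · rw [integral_add (integrable_const _) hGi, integral_const, hGint, integral_indicator_one hE]
    simp only [probReal_univ, one_smul, add_le_add_iff_left]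
    rwa [le_div_iff₀ hc, mul_comm]
  · filter_upwards [hG] with x hx
    filter_upwards [hx.eventually (eventually_lt_nhds (lt_add_of_pos_right (G x) hc)),
      eventually_ne_atTop 0] with N hN hN0
    calc birkhoffAverage ℝ T (birkhoffAverage ℝ S (F.indicator 1) N) N x
        ≤ birkhoffAverage ℝ T ((fun _ => c) + E.indicator 1) N x :=
          birkhoffAverage_mono (birkhoffAverage_le_add_indicator (abs_indicator_one_le F)
            hc.le N) N x
      _ = c + birkhoffAverage ℝ T (E.indicator 1) N x := by
          rw [birkhoffAverage_add, Pi.add_apply, Pi.add_apply,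
            birkhoffAverage_of_comp_eq ℝ (g := fun _ : X => c) rfl (Nat.cast_ne_zero.2 hN0)]
      _ ≤ 2 * c + G x := by linarith

open scoped symmDiff in
theorem exists_indicator_mem_adjoin_ae_eventually_birkhoffAverage_le
    (hS : MeasurePreserving S μ μ) (hT : MeasurePreserving T μ μ) {s : Set X}
    (hs : MeasurableSet[invSigma S ⊔ invSigma T] s) {c : ℝ} (hc : 0 < c) :
    ∃ t, t.indicator 1 ∈ Algebra.adjoin ℝ
        (rectangleIndicators (invSigma S) (invSigma T) : Set (X → ℝ)) ∧
      ∃ B : X → ℝ, Integrable B μ ∧ 0 ≤ᵐ[μ] B ∧ ∫ x, B x ∂μ ≤ 3 * c ∧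
        ∀ᵐ x ∂μ, ∀ᶠ N in atTop,
          birkhoffAverage ℝ T (birkhoffAverage ℝ S ((s ∆ t).indicator 1) N) N x ≤ B x := by
  obtain ⟨t, ht, htA, hts⟩ := exists_indicator_mem_adjoin_rectangleIndicators (μ := μ)
    (invSigma_le S) (invSigma_le T) hs (ε := ENNReal.ofReal (c ^ 2)) (by simp; positivity)
  rw [symmDiff_comm] at hts
  have hle : invSigma S ⊔ invSigma T ≤ ‹MeasurableSpace X› := sup_le (invSigma_le S) (invSigma_le T)
  obtain ⟨B, hBi, hB0, hBint, hB⟩ :=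
    exists_ae_eventually_birkhoffAverage_birkhoffAverage_indicator_le hS hT
      (hle _ (hs.symmDiff ht)) hc
  refine ⟨t, htA, B, hBi, hB0, hBint.trans ?_, hB⟩
  have hμ : μ.real (s ∆ t) / c ≤ c := by
    rw [div_le_iff₀ hc, ← sq]
    exact ENNReal.toReal_le_of_le_ofReal (by positivity) hts.le
  linarith

end SquareAverage

theorem exists_mem_span_indicator_abs_sub_le {X : Type*} [m : MeasurableSpace X] {f : X → ℝ}
    (hf : Measurable f) {C : ℝ} (hfC : ∀ x, |f x| ≤ C) {δ : ℝ} (hδ : 0 < δ) :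
    ∃ φ ∈ Submodule.span ℝ {ψ : X → ℝ | ∃ s, MeasurableSet s ∧ s.indicator 1 = ψ},
      ∀ x, |f x - φ x| ≤ δ := by
  set s : ℤ → Set X := fun k => (fun x => ⌊f x / δ⌋) ⁻¹' {k}
  set K := Finset.Icc (-⌈C / δ⌉) ⌈C / δ⌉
  have hK : ∀ x, ⌊f x / δ⌋ ∈ K := fun x => by
    have hx := abs_le.1 (hfC x)
    refine Finset.mem_Icc.2 ⟨Int.le_floor.2 ?_, (Int.floor_le_ceil _).trans (Int.ceil_mono ?_)⟩
    · push_cast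
      rw [le_div_iff₀ hδ]
      nlinarith [Int.le_ceil (C / δ), div_mul_cancel₀ C hδ.ne']
    · gcongr
      exact hx.2
  refine ⟨∑ k ∈ K, (δ * k) • (s k).indicator 1, Submodule.sum_mem _ fun k _ =>
    Submodule.smul_mem _ _ (Submodule.subset_span ⟨s k, (hf.div_const δ).floor
      (measurableSet_singleton k), rfl⟩), fun x => ?_⟩
  have hφ : (∑ k ∈ K, (δ * k) • (s k).indicator 1) x = δ * ⌊f x / δ⌋ := by
    rw [Finset.sum_apply, Finset.sum_eq_single_of_mem _ (hK x) fun k _ hk => ?_]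
    · simp [s]
    · simp [s, Ne.symm hk]
  rw [hφ, show f x - δ * ⌊f x / δ⌋ = δ * Int.fract (f x / δ) by
    rw [← Int.self_sub_floor, mul_sub, mul_div_cancel₀ _ hδ.ne'],
    abs_of_nonneg (mul_nonneg hδ.le (Int.fract_nonneg _))]
  exact mul_le_of_le_one_right hδ.le (Int.fract_lt_one _).le

section CubicConvergence

variable {X : Type*} [MeasurableSpace X] {μ : Measure X} {S T : X → X} {f₁ f₂ : X → ℝ}
  {C₁ C₂ : ℝ}

def cubicConvergent (μ : Measure X) (S T : X → X) (f₁ f₂ : X → ℝ) : Submodule ℝ (X → ℝ) where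
  carrier := {φ | ∀ᵐ x ∂μ, ∃ L, Tendsto (cubicAverage S T f₁ f₂ φ · x) atTop (𝓝 L)}
  zero_mem' := ae_of_all _ fun x => ⟨0, by simp [cubicAverage]⟩
  add_mem' {φ ψ} hφ hψ := by
    simp only [mem_ofPred_eq] at hφ hψ ⊢
    filter_upwards [hφ, hψ] with x ⟨L, hL⟩ ⟨L', hL'⟩
    exact ⟨L + L', by simpa only [cubicAverage_add] using hL.add hL'⟩
  smul_mem' c φ hφ := by
    simp only [mem_ofPred_eq] at hφ ⊢
    filter_upwards [hφ] with x ⟨L, hL⟩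
    exact ⟨c * L, by simpa only [cubicAverage_smul] using hL.const_mul c⟩

theorem mem_cubicConvergent_of_forall_eventually_le (hf₁C : ∀ x, |f₁ x| ≤ C₁)
    (hf₂C : ∀ x, |f₂ x| ≤ C₂) {f : X → ℝ} {φ : ℕ → X → ℝ}
    (hφ : ∀ k, φ k ∈ cubicConvergent μ S T f₁ f₂)
    (happrox : ∀ᵐ x ∂μ, ∀ ε > 0, ∃ k, ∀ᶠ N in atTop,
      birkhoffAverage ℝ T (birkhoffAverage ℝ S (fun y => |(f - φ k) y|) N) N x ≤ ε) :
    f ∈ cubicConvergent μ S T f₁ f₂ := by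
  filter_upwards [ae_all_iff.2 hφ, happrox] with x hx hxφ
  have hC : 0 ≤ C₁ * C₂ :=
    mul_nonneg ((abs_nonneg _).trans (hf₁C x)) ((abs_nonneg _).trans (hf₂C x))
  refine exists_tendsto_of_forall_eventually_abs_sub_le hx fun ε hε => ?_
  obtain ⟨k, hk⟩ := hxφ (ε / (C₁ * C₂ + 1)) (by positivity)
  refine ⟨k, hk.mono fun N hN => ?_⟩
  rw [← cubicAverage_sub]
  refine (abs_cubicAverage_le hf₁C hf₂C _ N x).trans ?_
  calc C₁ * C₂ * _ ≤ C₁ * C₂ * (ε / (C₁ * C₂ + 1)) := by gcongr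
    _ ≤ ε := by
      rw [mul_div_assoc', div_le_iff₀ (by positivity)]
      nlinarith

variable [IsFiniteMeasure μ] (hS : MeasurePreserving S μ μ) (hT : MeasurePreserving T μ μ)
  (hST : Function.Commute S T) (hf₁ : Measurable f₁) (hf₂ : Measurable f₂)
  (hf₁C : ∀ x, |f₁ x| ≤ C₁) (hf₂C : ∀ x, |f₂ x| ≤ C₂)
include hS hT hST hf₁ hf₂ hf₁C hf₂C

theorem indicator_inter_mem_cubicConvergent {A B : Set X} (hA : MeasurableSet[invSigma S] A)
    (hB : MeasurableSet[invSigma T] B) :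
    (A ∩ B).indicator 1 ∈ cubicConvergent μ S T f₁ f₂ := by
  obtain ⟨G₁, -, -, hG₁⟩ := hS.exists_integral_eq_ae_tendsto_birkhoffAverage
    (hf₁.mul (measurable_one.indicator hB.1)) (abs_mul_indicator_one_le hf₁C B)
  obtain ⟨G₂, -, -, hG₂⟩ := hT.exists_integral_eq_ae_tendsto_birkhoffAverage
    (hf₂.mul (measurable_one.indicator hA.1)) (abs_mul_indicator_one_le hf₂C A)
  filter_upwards [hG₁, hG₂] with x h₁ h₂
  refine ⟨G₁ x * G₂ x, (h₁.mul h₂).congr fun N => ?_⟩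
  rw [inter_indicator_one, cubicAverage_mul_of_invariant hST
    (indicator_one_comp_of_preimage_eq hA.2) (indicator_one_comp_of_preimage_eq hB.2)]

theorem adjoin_rectangleIndicators_le_cubicConvergent :
    Subalgebra.toSubmodule (Algebra.adjoin ℝ
      (rectangleIndicators (invSigma S) (invSigma T) : Set (X → ℝ))) ≤
      cubicConvergent μ S T f₁ f₂ := by
  rw [Algebra.adjoin_eq_span, Submonoid.closure_eq, Submodule.span_le]
  rintro _ ⟨A, B, hA, hB, rfl⟩
  exact indicator_inter_mem_cubicConvergent hS hT hST hf₁ hf₂ hf₁C hf₂C hA hB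

end CubicConvergence

section CubicConvergenceProbability

variable {X : Type*} [MeasurableSpace X] {μ : Measure X} [IsProbabilityMeasure μ] {S T : X → X}
  {f₁ f₂ : X → ℝ} {C₁ C₂ : ℝ} (hS : MeasurePreserving S μ μ) (hT : MeasurePreserving T μ μ)
  (hST : Function.Commute S T) (hf₁ : Measurable f₁) (hf₂ : Measurable f₂)
  (hf₁C : ∀ x, |f₁ x| ≤ C₁) (hf₂C : ∀ x, |f₂ x| ≤ C₂)
include hS hT hST hf₁ hf₂ hf₁C hf₂C

theorem indicator_mem_cubicConvergent {s : Set X}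
    (hs : MeasurableSet[invSigma S ⊔ invSigma T] s) :
    s.indicator 1 ∈ cubicConvergent μ S T f₁ f₂ := by
  choose t htA B hBi hB0 hBint hB using fun k : ℕ =>
    exists_indicator_mem_adjoin_ae_eventually_birkhoffAverage_le hS hT hs
      (by positivity : (0 : ℝ) < 1 / (k + 1))
  have hsmall := ae_exists_lt_of_forall_exists_integral_le hBi hB0 fun ε hε => by
    obtain ⟨k, hk⟩ := exists_nat_one_div_lt (by positivity : 0 < ε / 3)
    exact ⟨k, (hBint k).trans (by linarith)⟩
  refine mem_cubicConvergent_of_forall_eventually_le hf₁C hf₂C (fun k =>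
    adjoin_rectangleIndicators_le_cubicConvergent hS hT hST hf₁ hf₂ hf₁C hf₂C (htA k)) ?_
  filter_upwards [ae_all_iff.2 hB, hsmall] with x hxB hxsmall ε hε
  obtain ⟨k, hk⟩ := hxsmall ε hε
  refine ⟨k, (hxB k).mono fun N hN => ?_⟩
  rw [abs_indicator_one_sub_indicator_one]
  exact hN.trans hk.le

theorem mem_cubicConvergent_of_measurable {f₃ : X → ℝ} {C₃ : ℝ}
    (hf₃ : Measurable[invSigma S ⊔ invSigma T] f₃) (hf₃C : ∀ x, |f₃ x| ≤ C₃) :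
    f₃ ∈ cubicConvergent μ S T f₁ f₂ := by
  choose φ hφ hφf using fun k : ℕ => exists_mem_span_indicator_abs_sub_le
    (m := invSigma S ⊔ invSigma T) hf₃ hf₃C (by positivity : (0 : ℝ) < 1 / (k + 1))
  have hspan : Submodule.span ℝ {ψ : X → ℝ | ∃ s, MeasurableSet[invSigma S ⊔ invSigma T] s ∧
      s.indicator 1 = ψ} ≤ cubicConvergent μ S T f₁ f₂ := by
    rw [Submodule.span_le]
    rintro _ ⟨s, hs, rfl⟩
    exact indicator_mem_cubicConvergent hS hT hST hf₁ hf₂ hf₁C hf₂C hs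
  refine mem_cubicConvergent_of_forall_eventually_le hf₁C hf₂C (fun k => hspan (hφ k))
    (ae_of_all _ fun x ε hε => ?_)
  obtain ⟨k, hk⟩ := exists_nat_one_div_lt hε
  refine ⟨k, Eventually.of_forall fun N => ?_⟩
  exact (le_abs_self _).trans <| (abs_birkhoffAverage_le (fun y => abs_birkhoffAverage_le
    (fun z => (abs_abs _).trans_le (hφf k z)) N y) N x).trans hk.le

end CubicConvergenceProbability

theorem pointwise_cubic_average_of_invMeasurable_general {X : Type*} [MeasurableSpace X]
    (μ : Measure X) [IsProbabilityMeasure μ]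
    (S T : X ≃ᵐ X) (hS : MeasurePreserving S μ μ) (hT : MeasurePreserving T μ μ)
    (hcomm : ∀ x, S (T x) = T (S x))
    (f1 f2 f3 : X → ℝ) (hf1 : Measurable f1) (hf2 : Measurable f2)
    (hf3 : Measurable[invSigma ⇑S ⊔ invSigma ⇑T] f3)
    (hb1 : ∃ C, ∀ x, |f1 x| ≤ C) (hb2 : ∃ C, ∀ x, |f2 x| ≤ C) (hb3 : ∃ C, ∀ x, |f3 x| ≤ C) :
    ∀ᵐ x ∂μ, ∃ L : ℝ, Tendsto (fun N : ℕ =>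
      ((N : ℝ) ^ 2)⁻¹ * ∑ i ∈ Finset.range N, ∑ j ∈ Finset.range N,
        f1 ((⇑S)^[i] x) * f2 ((⇑T)^[j] x) * f3 ((⇑S)^[i] ((⇑T)^[j] x)))
      atTop (nhds L) := by
  obtain ⟨C₁, hC₁⟩ := hb1
  obtain ⟨C₂, hC₂⟩ := hb2
  obtain ⟨C₃, hC₃⟩ := hb3
  exact mem_cubicConvergent_of_measurable hS hT hcomm hf1 hf2 hC₁ hC₂ hf3 hC₃

/-- pointwise convergence of the cubic average when the third function is
measurable with respect to `I_S ∨ I_T`. -/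
theorem pointwise_cubic_average_of_invMeasurable {X : Type*} [MeasurableSpace X]
    (μ : Measure X) [IsProbabilityMeasure μ]
    (S T : X ≃ᵐ X) (hS : MeasurePreserving S μ μ) (hT : MeasurePreserving T μ μ)
    (hcomm : ∀ x, S (T x) = T (S x))
    (herg : ∀ s : Set X, MeasurableSet s → ⇑S ⁻¹' s = s → ⇑T ⁻¹' s = s → μ s = 0 ∨ μ s = 1)
    (f1 f2 f3 : X → ℝ) (hf1 : Measurable f1) (hf2 : Measurable f2)
    (hf3 : Measurable[invSigma ⇑S ⊔ invSigma ⇑T] f3)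
    (hb1 : ∃ C, ∀ x, |f1 x| ≤ C) (hb2 : ∃ C, ∀ x, |f2 x| ≤ C) (hb3 : ∃ C, ∀ x, |f3 x| ≤ C) :
    ∀ᵐ x ∂μ, ∃ L : ℝ, Tendsto (fun N : ℕ =>
      ((N : ℝ) ^ 2)⁻¹ * ∑ i ∈ Finset.range N, ∑ j ∈ Finset.range N,
        f1 ((⇑S)^[i] x) * f2 ((⇑T)^[j] x) * f3 ((⇑S)^[i] ((⇑T)^[j] x)))
      atTop (nhds L) :=
  pointwise_cubic_average_of_invMeasurable_general μ S T hS hT hcomm f1 f2 f3 hf1 hf2 hf3 hb1 hb2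
    hb3
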